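/- arXiv:2207.04671 — 7 statements merged into one kernel-verified Lean document; each statement's English description precedes it below -/
import Mathlib

section
/- Let F be an uncountable field and let M be a vector space over the rational function field F(T). If M has countable dimension as an F-vector space, then M = 0. -/
/-!
If `M ≠ 0`, the tower law `dim_F M = dim_F F(T) · dim_{F(T)} M` gives `dim_F M ≥ dim_F F(T)`.
But the partial fractions `(T - a)⁻¹`, `a ∈ F`, are linearly independent over `F`, so
`dim_F F(T) ≥ |F| > ℵ₀`, contradicting the countable dimension of `M`.
-/

universe u v w

open Cardinal

theorem Module.rank_le_aleph0_of_span_countable {R M : Type*} [Semiring R] [AddCommMonoid M]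
    [Module R M] [StrongRankCondition R] {s : Set M} (hs : s.Countable)
    (hspan : Submodule.span R s = ⊤) : Module.rank R M ≤ ℵ₀ := by
  have := rank_span_le (R := R) s
  rw [hspan, rank_top] at this
  exact this.trans hs.le_aleph0

theorem Module.lift_rank_le_lift_rank_of_nontrivial (F : Type u) (K : Type v) (A : Type w)
    [Semiring F] [Semiring K] [AddCommMonoid A]
    [Module F K] [Module K A] [Module F A] [IsScalarTower F K A]
    [StrongRankCondition F] [StrongRankCondition K] [Module.Free F K] [Module.Free K A]
    [Nontrivial A] :
    lift.{w} (Module.rank F K) ≤ lift.{v} (Module.rank F A) := by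
  rw [← lift_rank_mul_lift_rank F K A]
  exact le_mul_right (lift_eq_zero.not.mpr Module.rank_pos_of_free.ne')

theorem RatFunc.aleph0_lt_rank (F : Type*) [Field F] [Uncountable F] :
    ℵ₀ < Module.rank F (RatFunc F) :=
  aleph0_lt_mk.trans_le RatFunc.transcendental_X.linearIndependent_sub_inv.cardinal_le_rank

/-- Let `F` be an uncountable field and let `M` be a vector space over the rational function
field `F(T)`. If `M` has countable dimension as an `F`-vector space (i.e. it admits a countable
spanning set over `F`), then `M = 0`. -/
theorem stmt_1 (F : Type*) [Field F] [Uncountable F]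
    (M : Type*) [AddCommGroup M] [Module (RatFunc F) M]
    [Module F M] [IsScalarTower F (RatFunc F) M]
    (h : ∃ s : Set M, s.Countable ∧ Submodule.span F s = ⊤) :
    ∀ m : M, m = 0 := by
  obtain ⟨s, hs, hspan⟩ := h
  by_contra! ⟨m, hm⟩
  have : Nontrivial M := ⟨⟨m, 0, hm⟩⟩
  have hle := Module.lift_rank_le_lift_rank_of_nontrivial F (RatFunc F) M
  have hM := lift_le_aleph0.mpr (Module.rank_le_aleph0_of_span_countable hs hspan)
  exact (lift_le_aleph0.mp (hle.trans hM)).not_gt (RatFunc.aleph0_lt_rank F)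
end

section
/- Let F be an uncountable field, let g ∈ F[T] be a nonzero polynomial, and let S ⊆ F[T] be the multiplicative set of polynomials coprime to g. Let M be a module over the localization S⁻¹F[T] which has countable dimension as an F-vector space. Then every element of M is annihilated by some power of g. -/
/-!
Suppose no power of `g` kills `m`. Every nonzero `p ∈ F[T]` divides `q * g ^ N` for some `q`
coprime to `g`, and such `q` act invertibly, so `p • m = 0` forces `p = 0`. Hence for the
uncountably many `a` that are not roots of `g`, the elements `(T - a)⁻¹ • m` are defined, and
they are `F`-linearly independent: clearing denominators in a relation `∑ cₐ (T - a)⁻¹ • m = 0`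
gives `Q • m = 0` with `Q(a) = cₐ ∏_{b ≠ a} (a - b)`. This contradicts the countable dimension
of `M`.
-/

open Polynomial Lagrange

theorem exists_isCoprime_dvd_mul_pow {R : Type*} [CommRing R] [IsDomain R]
    [IsPrincipalIdealRing R] (g : R) {p : R} (hp : p ≠ 0) :
    ∃ (q : R) (N : ℕ), IsCoprime q g ∧ p ∣ q * g ^ N := by
  induction p using WfDvdMonoid.induction_on_irreducible with
  | zero => exact absurd rfl hp
  | unit u hu => exact ⟨1, 0, isCoprime_one_left, by simpa using hu.dvd⟩
  | mul a i ha hi ih =>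
    obtain ⟨q, N, hq, hdvd⟩ := ih ha
    by_cases hig : i ∣ g
    · refine ⟨q, N + 1, hq, ?_⟩
      calc i * a ∣ g * (q * g ^ N) := mul_dvd_mul hig hdvd
        _ = q * g ^ (N + 1) := by ring
    · refine ⟨i * q, N, (hi.coprime_iff_not_dvd.2 hig).mul_left hq, ?_⟩
      rw [mul_assoc]
      exact mul_dvd_mul_left i hdvd

theorem eq_zero_of_algebraMap_smul_eq_zero {R B M : Type*} [CommRing R] [IsDomain R]
    [IsPrincipalIdealRing R] [CommRing B] [Algebra R B] [AddCommGroup M] [Module B M] {g : R}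
    (hunit : ∀ q, IsCoprime q g → IsUnit (algebraMap R B q)) {m : M}
    (hm : ∀ n : ℕ, algebraMap R B g ^ n • m ≠ 0) {p : R} (hpm : algebraMap R B p • m = 0) :
    p = 0 := by
  by_contra hp
  obtain ⟨q, N, hq, c, hc⟩ := exists_isCoprime_dvd_mul_pow g hp
  apply hm N
  rw [← (hunit q hq).smul_eq_zero, smul_smul, ← map_pow, ← map_mul, hc, mul_comm, map_mul,
    mul_smul, hpm, smul_zero]

theorem LinearIndependent.countable_of_span_eq_top {R M ι : Type*} [Ring R] [Nontrivial R]
    [StrongRankCondition R] [AddCommGroup M] [Module R M] {v : ι → M}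
    (hv : LinearIndependent R v) {s : Set M} (hs : s.Countable)
    (hspan : Submodule.span R s = ⊤) : Countable ι := by
  have : Countable (Set.range v) := by
    rw [← Cardinal.mk_le_aleph0_iff]
    exact (linearIndependent_le_span'' hv.linearIndepOn_id s hspan).trans hs.le_aleph0
  exact (Set.rangeFactorization_injective.mpr hv.injective).countable

theorem linearIndependent_smul_inv_X_sub_C {F B M ι : Type*} [Field F] [CommRing B]
    [Algebra F[X] B] [Algebra F B] [IsScalarTower F F[X] B] [AddCommGroup M] [Module B M]
    [Module F M] [IsScalarTower F B M] {a : ι → F} (ha : Function.Injective a) {w : ι → B}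
    (hw : ∀ i, algebraMap F[X] B (X - C (a i)) * w i = 1) {m : M}
    (hm : ∀ p : F[X], algebraMap F[X] B p • m = 0 → p = 0) :
    LinearIndependent F (fun i => w i • m) := by
  classical
  rw [linearIndependent_iff']
  intro t c hsum i₀ hi₀
  have hnodal (i : ι) (hi : i ∈ t) :
      algebraMap F[X] B (nodal t a) * w i = algebraMap F[X] B (nodal (t.erase i) a) := by
    rw [nodal_eq_mul_nodal_erase hi, map_mul, mul_right_comm, hw, one_mul]
  have hsmul (r : F) (x : M) : r • x = algebraMap F[X] B (C r) • x := by
    rw [← algebraMap_eq, ← IsScalarTower.algebraMap_apply, algebraMap_smul]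
  set Q := ∑ i ∈ t, C (c i) * nodal (t.erase i) a
  have hQ : Q = 0 := by
    refine hm Q ?_
    calc algebraMap F[X] B Q • m = algebraMap F[X] B (nodal t a) • ∑ i ∈ t, c i • w i • m := by
          simp only [Q, map_sum, map_mul, Finset.sum_smul, Finset.smul_sum, hsmul, smul_smul]
          refine Finset.sum_congr rfl fun i hi => ?_
          rw [← hnodal i hi, mul_left_comm]
      _ = 0 := by rw [hsum, smul_zero]
  have hQeval : Q.eval (a i₀) = c i₀ * (nodal (t.erase i₀) a).eval (a i₀) := by
    rw [eval_finsetSum, Finset.sum_eq_single_of_mem i₀ hi₀]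
    · simp
    · intro i hi hne
      rw [eval_mul, eval_nodal_at_node (Finset.mem_erase.2 ⟨hne.symm, hi₀⟩), mul_zero]
  have hne : (nodal (t.erase i₀) a).eval (a i₀) ≠ 0 :=
    eval_nodal_not_at_node fun j hj => ha.ne (Finset.ne_of_mem_erase hj).symm
  simpa [hQ, hne] using hQeval

/-- Let `F` be an uncountable field, `g ∈ F[T]` a nonzero polynomial, and
`S ⊆ F[T]` the multiplicative set of polynomials coprime to `g`.  If `M` is a module over the
localization `S⁻¹F[T]` which has countable dimension as an `F`-vector space, then every element
of `M` is annihilated by some power of `g`. -/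
theorem stmt_2 (F : Type*) [Field F] [Uncountable F]
    (g : Polynomial F) (hg : g ≠ 0)
    (S : Submonoid (Polynomial F)) (hS : ∀ p : Polynomial F, p ∈ S ↔ IsCoprime p g)
    (M : Type*) [AddCommGroup M] [Module (Localization S) M]
    [Module F M] [IsScalarTower F (Localization S) M]
    (h : ∃ s : Set M, s.Countable ∧ Submodule.span F s = ⊤) :
    ∀ m : M, ∃ n : ℕ, (algebraMap (Polynomial F) (Localization S) g) ^ n • m = 0 := by
  obtain ⟨s, hs, hspan⟩ := h
  intro m
  by_contra! hm
  have hunit (q : F[X]) (hq : IsCoprime q g) : IsUnit (algebraMap F[X] (Localization S) q) :=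
    IsLocalization.map_units _ (⟨q, (hS q).2 hq⟩ : S)
  have hli := linearIndependent_smul_inv_X_sub_C (a := ((↑) : {a // ¬g.IsRoot a} → F))
    Subtype.val_injective
    (fun a => Ring.mul_inverse_cancel _ <| hunit _ <|
      (irreducible_X_sub_C _).coprime_iff_not_dvd.2 (mt dvd_iff_isRoot.1 a.2))
    (fun _ => eq_zero_of_algebraMap_smul_eq_zero hunit hm)
  have hnonroots : {a | ¬g.IsRoot a}.Countable :=
    Set.countable_coe_iff.1 (hli.countable_of_span_eq_top hs hspan)
  have hroots : {a | g.IsRoot a}.Countable := (finite_setOfPred_isRoot hg).countable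
  exact not_countable (α := F) <| Set.countable_univ_iff.1 <|
    Set.compl_union_self {a | g.IsRoot a} ▸ hnonroots.union hroots
end

section
/- Let R be a commutative ring, let g₀, …, g_n ∈ R be elements generating the unit ideal, and let M be any R-module. Then the extended ordered Čech complex 0 → M → ∏ᵢ M_{gᵢ} → ∏_{i<j} M_{gᵢgⱼ} → ⋯ → M_{g₀⋯g_n} → 0 is exact, where M_g denotes the localization of M at the element g and the differentials are the usual alternating sums of localization maps. -/
section CechSetup

variable {R : Type u} [CommRing R]

/-- Scalar multiplication by a divisor of `b` is invertible on the localization of a module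
at the powers of `b`. -/
theorem cechAuxIsUnit (M : Type u) [AddCommGroup M] [Module R M] (a b : R) (h : a ∣ b)
    (x : Submonoid.powers a) :
    IsUnit (algebraMap R (Module.End R (LocalizedModule (Submonoid.powers b) M)) x) := by
  obtain ⟨m, hm⟩ := x.2
  have hm' : a ^ m = (x : R) := hm
  obtain ⟨c, hc⟩ := h
  have hb : IsUnit (algebraMap R (Module.End R (LocalizedModule (Submonoid.powers b) M))
      (b ^ m)) :=
    IsLocalizedModule.map_units (LocalizedModule.mkLinearMap (Submonoid.powers b) M)
      (⟨b ^ m, ⟨m, rfl⟩⟩ : Submonoid.powers b)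
  have hx : (b : R) ^ m = (x : R) * c ^ m := by rw [hc, mul_pow, hm']
  rw [hx, map_mul] at hb
  exact (((Commute.all ((x : R)) (c ^ m)).map (algebraMap R
    (Module.End R (LocalizedModule (Submonoid.powers b) M)))).isUnit_mul_iff.mp hb).1

/-- The canonical localization map `M_a → M_b` when `a ∣ b`. -/
noncomputable def locTrans (M : Type u) [AddCommGroup M] [Module R M] (a b : R) (h : a ∣ b) :
    LocalizedModule (Submonoid.powers a) M →ₗ[R] LocalizedModule (Submonoid.powers b) M :=
  LocalizedModule.lift (Submonoid.powers a)
    (LocalizedModule.mkLinearMap (Submonoid.powers b) M) (cechAuxIsUnit M a b h)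

variable (n : ℕ) (g : Fin (n + 1) → R) (M : Type u) [AddCommGroup M] [Module R M]

/-- The degree-`k` component of the ordered Čech complex of `M` with respect to
`g₀, …, g_n`: the product, over all strictly increasing `(k+1)`-tuples `s` in `{0, …, n}`,
of the localizations of `M` at the powers of `∏ j, g (s j)`. -/
abbrev CechComponent (k : ℕ) : Type u :=
  ∀ s : Fin (k + 1) ↪o Fin (n + 1), LocalizedModule (Submonoid.powers (∏ j, g (s j))) M

/-- The augmentation `M → ∏ᵢ M_{gᵢ}` of the Čech complex. -/
noncomputable def cechEps (m : M) : CechComponent n g M 0 :=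
  fun s => LocalizedModule.mkLinearMap (Submonoid.powers (∏ j, g (s j))) M m

/-- The Čech differential, given by the usual alternating sums of localization maps. -/
noncomputable def cechD (k : ℕ) (x : CechComponent n g M k) : CechComponent n g M (k + 1) :=
  fun t => ∑ j : Fin (k + 2), ((-1 : ℤ) ^ (j : ℕ)) •
    locTrans M (∏ i, g (((Fin.succAboveOrderEmb j).trans t) i)) (∏ i, g (t i))
      ⟨g (t j), by
        rw [Fin.prod_univ_succAbove (fun i => g (t i)) j, mul_comm]
        rfl⟩
      (x ((Fin.succAboveOrderEmb j).trans t))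

end CechSetup


/-!
Index cochains of degree `j` by strictly increasing `j`-tuples, so that degree `0` is
`M_1 = M` and the augmentation becomes the first differential. After localizing at one `g i₀`,
the element `g i₀` is invertible, and inserting the index `i₀` (with the sign of its position)
is a contracting homotopy, so the localized complex is exact. A localized cochain is the image of
a genuine one only up to a power of `g i₀`, and the same holds for vanishing, uniformly because
there are finitely many components. So for a cocycle `x` some `g i₀ ^ K • x` is a coboundary, for
every `i₀`; since the `g i` generate the unit ideal, so do their powers, and `x` is a coboundary.
-/

open LocalizedModule

namespace Cech

section AwayMap

variable {R : Type*} [CommRing R] (M : Type*) [AddCommGroup M] [Module R M]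

theorem isUnit_algebraMap_of_dvd_pow {a b : R} {e : ℕ} (h : a ∣ b ^ e)
    (x : Submonoid.powers a) :
    IsUnit (algebraMap R (Module.End R (LocalizedModule (Submonoid.powers b) M)) x) := by
  obtain ⟨x, m, rfl⟩ := x
  obtain ⟨c, hc⟩ := pow_dvd_pow_of_dvd h m
  have hb := IsLocalizedModule.map_units (mkLinearMap (Submonoid.powers b) M)
    ⟨(b ^ e) ^ m, pow_mem (pow_mem (Submonoid.mem_powers b) e) m⟩
  change IsUnit (algebraMap _ _ ((b ^ e) ^ m)) at hb
  change IsUnit (algebraMap _ _ (a ^ m))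
  rw [hc, map_mul] at hb
  exact (((Commute.all _ _).map _).isUnit_mul_iff.mp hb).1

open Classical in
/-- The localization map `M_a → M_b`; it is `0` unless `a` divides a power of `b`. -/
noncomputable def awayMap (a b : R) :
    LocalizedModule (Submonoid.powers a) M →ₗ[R] LocalizedModule (Submonoid.powers b) M :=
  if h : ∃ e, a ∣ b ^ e then
    lift _ (mkLinearMap (Submonoid.powers b) M) (isUnit_algebraMap_of_dvd_pow M h.choose_spec)
  else 0

variable {M}

theorem awayMap_comp_mkLinearMap {a b : R} {e : ℕ} (h : a ∣ b ^ e) :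
    awayMap M a b ∘ₗ mkLinearMap _ M = mkLinearMap _ M := by
  rw [awayMap, dif_pos ⟨e, h⟩, lift_comp]

@[simp]
theorem awayMap_mk_one {a b : R} {e : ℕ} (h : a ∣ b ^ e) (m : M) :
    awayMap M a b (mk m 1) = mk m 1 :=
  LinearMap.congr_fun (awayMap_comp_mkLinearMap h) m

theorem awayMap_awayMap {a b c : R} {e f : ℕ} (hab : a ∣ b ^ e) (hbc : b ∣ c ^ f)
    (x : LocalizedModule (Submonoid.powers a) M) :
    awayMap M b c (awayMap M a b x) = awayMap M a c x := by
  have hac : a ∣ c ^ (f * e) := hab.trans (pow_mul c f e ▸ pow_dvd_pow_of_dvd hbc e)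
  have := IsLocalizedModule.ext (Submonoid.powers a) (mkLinearMap _ M)
    (isUnit_algebraMap_of_dvd_pow M hac) (j := awayMap M b c ∘ₗ awayMap M a b)
    (k := awayMap M a c) (by
      rw [LinearMap.comp_assoc, awayMap_comp_mkLinearMap hab, awayMap_comp_mkLinearMap hbc,
        awayMap_comp_mkLinearMap hac])
  exact LinearMap.congr_fun this x

@[simp]
theorem awayMap_self (a : R) (x : LocalizedModule (Submonoid.powers a) M) :
    awayMap M a a x = x := by
  have := IsLocalizedModule.ext (Submonoid.powers a) (mkLinearMap _ M)
    (IsLocalizedModule.map_units (mkLinearMap _ M)) (j := awayMap M a a) (k := LinearMap.id)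
    (by rw [awayMap_comp_mkLinearMap (dvd_pow_self a one_ne_zero), LinearMap.id_comp])
  exact LinearMap.congr_fun this x

theorem pow_smul_injective_of_dvd_pow {a b : R} {e : ℕ} (h : a ∣ b ^ e) (k : ℕ) :
    Function.Injective fun y : LocalizedModule (Submonoid.powers b) M => a ^ k • y := by
  have hu := isUnit_algebraMap_of_dvd_pow M h ⟨a ^ k, pow_mem (Submonoid.mem_powers a) k⟩
  intro y y' hyy
  apply ((Module.End.isUnit_iff _).mp hu).injective
  change algebraMap R (Module.End R _) (a ^ k) y = algebraMap R (Module.End R _) (a ^ k) y'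
  rwa [Module.algebraMap_end_apply, Module.algebraMap_end_apply]

theorem smul_mk_self {S : Submonoid R} (s : S) (m : M) :
    (s : R) • (mk m s : LocalizedModule S M) = mk m 1 := by
  rw [smul'_mk]
  exact mk_cancel s m

theorem eventually_exists_awayMap_eq_pow_smul (a c : R)
    (v : LocalizedModule (Submonoid.powers (c * a)) M) :
    ∀ᶠ K in Filter.atTop, ∃ x, awayMap M a (c * a) x = c ^ K • v := by
  obtain ⟨⟨m, _, K, rfl⟩, hv⟩ :=
    IsLocalizedModule.surj (Submonoid.powers (c * a)) (mkLinearMap _ M) v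
  replace hv : (c * a) ^ K • v = mk m 1 := hv
  have hdvd : a ∣ (c * a) ^ 1 := dvd_pow (dvd_mul_left a c) one_ne_zero
  let s : Submonoid.powers a := ⟨a ^ K, pow_mem (Submonoid.mem_powers a) K⟩
  refine Filter.eventually_atTop.2 ⟨K, fun L hL => ?_⟩
  obtain ⟨d, rfl⟩ := Nat.exists_eq_add_of_le hL
  refine ⟨c ^ d • mk m s, pow_smul_injective_of_dvd_pow hdvd K ?_⟩
  dsimp only
  rw [← map_smul, smul_comm, smul_mk_self s, map_smul, awayMap_mk_one hdvd, ← hv, smul_smul,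
    smul_smul, mul_pow, pow_add]
  ring_nf

theorem eventually_pow_smul_eq_zero {a c : R} {x : LocalizedModule (Submonoid.powers a) M}
    (hx : awayMap M a (c * a) x = 0) : ∀ᶠ K in Filter.atTop, c ^ K • x = 0 := by
  obtain ⟨⟨m, _, r, rfl⟩, hm⟩ := IsLocalizedModule.surj (Submonoid.powers a) (mkLinearMap _ M) x
  replace hm : a ^ r • x = mk m 1 := hm
  have hm0 : mkLinearMap (Submonoid.powers (c * a)) M m = 0 := by
    rw [mkLinearMap_apply, ← awayMap_mk_one (dvd_pow (dvd_mul_left a c) one_ne_zero), ← hm,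
      map_smul, hx, smul_zero]
  obtain ⟨⟨_, e, rfl⟩, he⟩ := (IsLocalizedModule.eq_zero_iff (Submonoid.powers (c * a)) _).1 hm0
  replace he : (c * a) ^ e • m = 0 := he
  refine Filter.eventually_atTop.2 ⟨e, fun L hL => ?_⟩
  obtain ⟨d, rfl⟩ := Nat.exists_eq_add_of_le hL
  apply pow_smul_injective_of_dvd_pow (dvd_pow_self a one_ne_zero) (r + e)
  dsimp only
  rw [smul_zero, smul_smul, show a ^ (r + e) * c ^ (e + d) = c ^ d * (c * a) ^ e * a ^ r by ring,
    mul_smul, hm, ← mkLinearMap_apply, ← map_smul, mul_smul, he, smul_zero, map_zero]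

end AwayMap

section SuccAbove

theorem val_succAbove_cases {m : ℕ} (p : Fin (m + 1)) (i : Fin m) :
    (i : ℕ) < p ∧ (p.succAbove i : ℕ) = i ∨ (p : ℕ) ≤ i ∧ (p.succAbove i : ℕ) = i + 1 := by
  rcases lt_or_ge i.castSucc p with h | h
  · exact Or.inl ⟨h, by rw [Fin.succAbove_of_castSucc_lt _ _ h, Fin.val_castSucc]⟩
  · exact Or.inr ⟨h, by rw [Fin.succAbove_of_le_castSucc _ _ h, Fin.val_succ]⟩

theorem odd_add_succAbove_of_succAbove_eq {m : ℕ} {a : Fin (m + 2)} {l c : Fin (m + 1)}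
    (h : (a.succAbove l).succAbove c = a) : Odd ((a : ℕ) + l + (a.succAbove l : ℕ) + c) := by
  have hval := congrArg Fin.val h
  rw [Nat.odd_iff]
  rcases val_succAbove_cases a l with h1 | h1 <;>
    rcases val_succAbove_cases (a.succAbove l) c with h2 | h2 <;> omega

theorem neg_one_pow_mul_neg_one_pow {S : Type*} [Ring S] {m n p q : ℕ}
    (h : Odd (m + n + p + q)) : (-1 : S) ^ m * (-1) ^ n = -((-1) ^ p * (-1) ^ q) := by
  obtain ⟨r, hr⟩ := h
  rw [← pow_add, ← pow_add, neg_one_pow_eq_pow_mod_two, neg_one_pow_eq_pow_mod_two (p + q)]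
  rcases Nat.mod_two_eq_zero_or_one (p + q) with h | h
  · rw [h, show (m + n) % 2 = 1 by omega]
    simp
  · rw [h, show (m + n) % 2 = 0 by omega]
    simp

end SuccAbove

section OrderEmbedding

variable {ι : Type*} [LinearOrder ι]

instance {α β : Type*} [Preorder α] [Preorder β] [Finite β] : Finite (α ↪o β) :=
  Finite.of_injective _ RelEmbedding.toEmbedding_injective

theorem orderEmbedding_eq_of_range_eq {k : ℕ} {f f' : Fin k ↪o ι}
    (h : Set.range f = Set.range f') : f = f' :=
  DFunLike.coe_injective ((f.strictMono.range_inj f'.strictMono).1 h)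

def face {k : ℕ} (l : Fin (k + 1)) (t : Fin (k + 1) ↪o ι) : Fin k ↪o ι :=
  (Fin.succAboveOrderEmb l).trans t

@[simp]
theorem face_apply {k : ℕ} (l : Fin (k + 1)) (t : Fin (k + 1) ↪o ι) (x : Fin k) :
    face l t x = t (l.succAbove x) :=
  rfl

theorem range_face {k : ℕ} (l : Fin (k + 1)) (t : Fin (k + 1) ↪o ι) :
    Set.range (face l t) = Set.range t \ {t l} := by
  rw [face, RelEmbedding.coe_trans, Set.range_comp, Fin.range_succAboveOrderEmb,
    Set.image_compl_eq_range_sdiff_image t.injective, Set.image_singleton]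

theorem succAbove_succAbove_of_succAbove_eq {m : ℕ} {a : Fin (m + 2)} {l c : Fin (m + 1)}
    (h : (a.succAbove l).succAbove c = a) (x : Fin m) :
    (a.succAbove l).succAbove (c.succAbove x) = a.succAbove (l.succAbove x) := by
  have : face c (Fin.succAboveOrderEmb (a.succAbove l)) = face l (Fin.succAboveOrderEmb a) := by
    apply orderEmbedding_eq_of_range_eq
    rw [range_face, range_face, Fin.range_succAboveOrderEmb, Fin.range_succAboveOrderEmb]
    ext y
    simp [h, and_comm]
  exact DFunLike.congr_fun this x

theorem face_face_of_succAbove_eq {m : ℕ} {a : Fin (m + 2)} {l c : Fin (m + 1)}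
    (h : (a.succAbove l).succAbove c = a) (t : Fin (m + 2) ↪o ι) :
    face c (face (a.succAbove l) t) = face l (face a t) := by
  ext x
  simp [succAbove_succAbove_of_succAbove_eq h]

variable {k : ℕ} (t : Fin k ↪o ι) (i : ι)

theorem card_insert_map_eq (hi : i ∉ Set.range t) :
    (insert i (Finset.univ.map t.toEmbedding)).card = k + 1 := by
  rw [Finset.card_insert_of_notMem (by simpa using fun x hx => hi ⟨x, hx⟩)]
  simp

variable (hi : i ∉ Set.range t)

noncomputable def insertEmb : Fin (k + 1) ↪o ι :=
  (insert i (Finset.univ.map t.toEmbedding)).orderEmbOfFin (card_insert_map_eq t i hi)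

noncomputable def insertPos : Fin (k + 1) :=
  ((insert i (Finset.univ.map t.toEmbedding)).orderIsoOfFin (card_insert_map_eq t i hi)).symm
    ⟨i, Finset.mem_insert_self _ _⟩

@[simp]
theorem insertEmb_insertPos : insertEmb t i hi (insertPos t i hi) = i := by
  rw [insertEmb, ← Finset.coe_orderIsoOfFin_apply, insertPos, OrderIso.apply_symm_apply]

theorem range_insertEmb : Set.range (insertEmb t i hi) = insert i (Set.range t) := by
  rw [insertEmb, Finset.range_orderEmbOfFin, Finset.coe_insert, Finset.coe_map]
  simp

theorem face_insertPos : face (insertPos t i hi) (insertEmb t i hi) = t := by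
  apply orderEmbedding_eq_of_range_eq
  rw [range_face, insertEmb_insertPos, range_insertEmb]
  exact Set.insert_sdiff_self_of_notMem hi

theorem eq_insertEmb_of_face_eq {u : Fin (k + 1) ↪o ι} {q : Fin (k + 1)} (hq : u q = i)
    (hu : face q u = t) : u = insertEmb t i hi ∧ q = insertPos t i hi := by
  have hu' : u = insertEmb t i hi := by
    apply orderEmbedding_eq_of_range_eq
    rw [range_insertEmb, ← hu, range_face, hq, Set.insert_sdiff_singleton,
      Set.insert_eq_of_mem (hq ▸ Set.mem_range_self q)]
  refine ⟨hu', (insertEmb t i hi).injective ?_⟩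
  rw [insertEmb_insertPos, ← hu', hq]

theorem prod_insertEmb {N : Type*} [CommMonoid N] (f : ι → N) :
    ∏ j, f (insertEmb t i hi j) = f i * ∏ j, f (t j) := by
  rw [Fin.prod_univ_succAbove _ (insertPos t i hi), insertEmb_insertPos]
  conv_rhs => rw [← face_insertPos t i hi]
  rfl

end OrderEmbedding

section Cochain

variable {R : Type*} [CommRing R] (M : Type*) [AddCommGroup M] [Module R M]
  {ι : Type*} [LinearOrder ι]

/-- Degree `j` is indexed by `j`-tuples, so `CechComponent n g M k` is
`Cochain M (prodWeight g) (k + 1)`. -/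
abbrev Cochain (w : ∀ j, (Fin j ↪o ι) → R) (j : ℕ) : Type _ :=
  ∀ s : Fin j ↪o ι, LocalizedModule (Submonoid.powers (w j s)) M

noncomputable def coboundary (w : ∀ j, (Fin j ↪o ι) → R) (j : ℕ) :
    Cochain M w j →ₗ[R] Cochain M w (j + 1) :=
  LinearMap.pi fun t => ∑ l : Fin (j + 1), ((-1 : R) ^ (l : ℕ)) •
    (awayMap M (w j (face l t)) (w (j + 1) t) ∘ₗ LinearMap.proj (face l t))

variable {M} {w : ∀ j, (Fin j ↪o ι) → R}

theorem coboundary_apply {j : ℕ} (x : Cochain M w j) (t : Fin (j + 1) ↪o ι) :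
    coboundary M w j x t = ∑ l : Fin (j + 1), ((-1 : R) ^ (l : ℕ)) •
      awayMap M (w j (face l t)) (w (j + 1) t) (x (face l t)) := by
  simp [coboundary, LinearMap.sum_apply]

theorem coboundary_coboundary (hw : ∀ j (l : Fin (j + 1)) t, w j (face l t) ∣ w (j + 1) t)
    {j : ℕ} (x : Cochain M w j) : coboundary M w (j + 1) (coboundary M w j x) = 0 := by
  funext t
  simp only [coboundary_apply, map_sum, map_smul, Finset.smul_sum, smul_smul, Pi.zero_apply,
    awayMap_awayMap (dvd_pow (hw _ _ _) one_ne_zero) (dvd_pow (hw _ _ _) one_ne_zero)]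
  rw [← Fintype.sum_prod_type']
  -- The terms for `(a, l)` and `(a.succAbove l, c)` delete the same two indices of `t`.
  choose c hc using fun p : Fin (j + 2) × Fin (j + 1) =>
    Fin.exists_succAbove_eq (Fin.succAbove_ne p.1 p.2).symm
  refine Finset.sum_ninvolution (fun p => (p.1.succAbove p.2, c p)) (fun p => ?_)
    (fun p _ hp => Fin.succAbove_ne p.1 p.2 (congrArg Prod.fst hp)) (fun _ => Finset.mem_univ _)
    (fun p => ?_)
  · dsimp only
    rw [face_face_of_succAbove_eq (hc p), ← add_smul,
      neg_one_pow_mul_neg_one_pow (odd_add_succAbove_of_succAbove_eq (hc p)), neg_add_cancel,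
      zero_smul]
  · have h1 : (p.1.succAbove p.2).succAbove (c p) = p.1 := hc p
    have h2 := hc (p.1.succAbove p.2, c p)
    dsimp only at h2
    rw [h1] at h2
    exact Prod.ext h1 (Fin.succAbove_right_injective h2)

abbrev prodWeight (g : ι → R) (j : ℕ) (s : Fin j ↪o ι) : R :=
  ∏ i, g (s i)

theorem prodWeight_face_dvd (g : ι → R) (j : ℕ) (l : Fin (j + 1)) (t : Fin (j + 1) ↪o ι) :
    prodWeight g j (face l t) ∣ prodWeight g (j + 1) t :=
  ⟨g (t l), by rw [prodWeight, prodWeight, Fin.prod_univ_succAbove _ l, mul_comm]; rfl⟩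

variable (M) in
noncomputable def localize (c : R) (w : ∀ j, (Fin j ↪o ι) → R) (j : ℕ) :
    Cochain M w j →ₗ[R] Cochain M (c • w) j :=
  LinearMap.pi fun s => awayMap M (w j s) (c * w j s) ∘ₗ LinearMap.proj s

variable {c : R}

theorem coboundary_localize (hw : ∀ j (l : Fin (j + 1)) t, w j (face l t) ∣ w (j + 1) t)
    {j : ℕ} (x : Cochain M w j) :
    coboundary M (c • w) j (localize M c w j x) = localize M c w (j + 1) (coboundary M w j x) := by
  funext t
  simp only [coboundary_apply, localize, LinearMap.pi_apply, LinearMap.comp_apply,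
    LinearMap.proj_apply, map_sum, map_smul, Pi.smul_apply, smul_eq_mul]
  refine Finset.sum_congr rfl fun l _ => ?_
  rw [awayMap_awayMap (dvd_pow (dvd_mul_left _ c) one_ne_zero)
      (dvd_pow (mul_dvd_mul_left c (hw j l t)) one_ne_zero),
    awayMap_awayMap (dvd_pow (hw j l t) one_ne_zero) (dvd_pow (dvd_mul_left _ c) one_ne_zero)]

theorem exists_localize_eq_pow_smul [Finite ι] {j : ℕ} (z : Cochain M (c • w) j) :
    ∃ (K : ℕ) (y : Cochain M w j), localize M c w j y = c ^ K • z := by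
  obtain ⟨K, hK⟩ := (Filter.eventually_all.2 fun s =>
    eventually_exists_awayMap_eq_pow_smul (M := M) (w j s) c (z s)).exists
  choose y hy using hK
  exact ⟨K, y, funext hy⟩

theorem exists_pow_smul_eq_zero_of_localize_eq_zero [Finite ι] {j : ℕ} {x : Cochain M w j}
    (hx : localize M c w j x = 0) : ∃ K : ℕ, c ^ K • x = 0 := by
  obtain ⟨K, hK⟩ := (Filter.eventually_all.2 fun s =>
    eventually_pow_smul_eq_zero (congrFun hx s)).exists
  exact ⟨K, funext hK⟩

end Cochain

section Contraction

variable {R : Type*} [CommRing R] {M : Type*} [AddCommGroup M] [Module R M]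
  {ι : Type*} [LinearOrder ι] (g : ι → R) (i₀ : ι)

theorem weight_face_dvd {j : ℕ} (l : Fin (j + 1)) (t : Fin (j + 1) ↪o ι) :
    (g i₀ • prodWeight g) j (face l t) ∣ ((g i₀ • prodWeight g) (j + 1) t) ^ 1 :=
  dvd_pow (mul_dvd_mul_left _ (prodWeight_face_dvd g j l t)) one_ne_zero

theorem weight_insertEmb_dvd {j : ℕ} (s : Fin j ↪o ι) (hi : i₀ ∉ Set.range s) :
    (g i₀ • prodWeight g) (j + 1) (insertEmb s i₀ hi) ∣ ((g i₀ • prodWeight g) j s) ^ 2 := by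
  simp only [Pi.smul_apply, smul_eq_mul, prodWeight, prod_insertEmb, sq]
  exact mul_dvd_mul (dvd_mul_right _ _) dvd_rfl

variable (M) in
noncomputable def contraction (j : ℕ) :
    Cochain M (g i₀ • prodWeight g) (j + 1) →ₗ[R] Cochain M (g i₀ • prodWeight g) j :=
  LinearMap.pi fun s => if hi : i₀ ∈ Set.range s then 0 else
    (-1 : R) ^ (insertPos s i₀ hi : ℕ) •
      (awayMap M ((g i₀ • prodWeight g) (j + 1) (insertEmb s i₀ hi))
        ((g i₀ • prodWeight g) j s) ∘ₗ LinearMap.proj (insertEmb s i₀ hi))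

variable {g i₀}

theorem contraction_apply_of_mem {j : ℕ} (z : Cochain M (g i₀ • prodWeight g) (j + 1))
    {s : Fin j ↪o ι} (hi : i₀ ∈ Set.range s) : contraction M g i₀ j z s = 0 := by
  rw [contraction, LinearMap.pi_apply, dif_pos hi, LinearMap.zero_apply]

theorem contraction_apply_of_not_mem {j : ℕ} (z : Cochain M (g i₀ • prodWeight g) (j + 1))
    {s : Fin j ↪o ι} (hi : i₀ ∉ Set.range s) :
    contraction M g i₀ j z s = (-1 : R) ^ (insertPos s i₀ hi : ℕ) •
      awayMap M ((g i₀ • prodWeight g) (j + 1) (insertEmb s i₀ hi)) ((g i₀ • prodWeight g) j s)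
        (z (insertEmb s i₀ hi)) := by
  rw [contraction, LinearMap.pi_apply, dif_neg hi]
  rfl

theorem contraction_coboundary_apply_of_not_mem {j : ℕ}
    (z : Cochain M (g i₀ • prodWeight g) j) {t : Fin j ↪o ι} (hi : i₀ ∉ Set.range t) :
    contraction M g i₀ j (coboundary M (g i₀ • prodWeight g) j z) t = z t +
      ∑ l : Fin j, ((-1 : R) ^ (insertPos t i₀ hi : ℕ) *
          (-1) ^ ((insertPos t i₀ hi).succAbove l : ℕ)) •
        awayMap M
          ((g i₀ • prodWeight g) j (face ((insertPos t i₀ hi).succAbove l) (insertEmb t i₀ hi)))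
          ((g i₀ • prodWeight g) j t)
          (z (face ((insertPos t i₀ hi).succAbove l) (insertEmb t i₀ hi))) := by
  rw [contraction_apply_of_not_mem _ hi, coboundary_apply, map_sum, Finset.smul_sum,
    Fin.sum_univ_succAbove _ (insertPos t i₀ hi)]
  simp only [map_smul, smul_smul,
    awayMap_awayMap (weight_face_dvd g i₀ _ _) (weight_insertEmb_dvd g i₀ t hi)]
  rw [face_insertPos, awayMap_self, ← pow_add, Even.neg_one_pow ⟨_, rfl⟩, one_smul]

theorem coboundary_contraction_apply_of_not_mem {k : ℕ}
    (z : Cochain M (g i₀ • prodWeight g) (k + 1)) {t : Fin (k + 1) ↪o ι}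
    (hi : i₀ ∉ Set.range t) :
    coboundary M (g i₀ • prodWeight g) k (contraction M g i₀ k z) t =
      -∑ l : Fin (k + 1), ((-1 : R) ^ (insertPos t i₀ hi : ℕ) *
          (-1) ^ ((insertPos t i₀ hi).succAbove l : ℕ)) •
        awayMap M ((g i₀ • prodWeight g) (k + 1)
            (face ((insertPos t i₀ hi).succAbove l) (insertEmb t i₀ hi)))
          ((g i₀ • prodWeight g) (k + 1) t)
          (z (face ((insertPos t i₀ hi).succAbove l) (insertEmb t i₀ hi))) := by
  rw [coboundary_apply, ← Finset.sum_neg_distrib]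
  refine Finset.sum_congr rfl fun l _ => ?_
  set u := insertEmb t i₀ hi
  set q := insertPos t i₀ hi
  have hil : i₀ ∉ Set.range (face l t) := by
    rw [range_face]
    exact fun h => hi h.1
  -- Inserting `i₀` into the `l`-th face of `t` gives the `q.succAbove l`-th face of `u`.
  obtain ⟨c, hc⟩ := Fin.exists_succAbove_eq (Fin.succAbove_ne q l).symm
  have hface : face c (face (q.succAbove l) u) = face l t := by
    rw [face_face_of_succAbove_eq hc, face_insertPos]
  have hval : face (q.succAbove l) u c = i₀ := by
    rw [face_apply, hc, insertEmb_insertPos]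
  obtain ⟨hu, hq⟩ := eq_insertEmb_of_face_eq (face l t) i₀ hil hval hface
  have hdvd := weight_insertEmb_dvd g i₀ (face l t) hil
  rw [← hu] at hdvd
  have hodd : Odd ((l : ℕ) + c + q + (q.succAbove l : ℕ)) := by
    have := odd_add_succAbove_of_succAbove_eq hc
    rwa [show (q : ℕ) + l + (q.succAbove l : ℕ) + c = l + c + q + (q.succAbove l : ℕ) by ring]
      at this
  rw [contraction_apply_of_not_mem _ hil, ← hu, ← hq, map_smul, smul_smul,
    awayMap_awayMap hdvd (weight_face_dvd g i₀ _ _), ← neg_smul, neg_one_pow_mul_neg_one_pow hodd]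

theorem coboundary_contraction_apply_of_mem {k : ℕ}
    (z : Cochain M (g i₀ • prodWeight g) (k + 1)) {t : Fin (k + 1) ↪o ι} {p : Fin (k + 1)}
    (hp : t p = i₀) :
    coboundary M (g i₀ • prodWeight g) k (contraction M g i₀ k z) t = z t := by
  have hip : i₀ ∉ Set.range (face p t) := by
    rw [range_face, hp]
    exact fun h => h.2 rfl
  obtain ⟨ht, hpq⟩ := eq_insertEmb_of_face_eq (face p t) i₀ hip hp rfl
  have hdvd := weight_insertEmb_dvd g i₀ (face p t) hip
  rw [← ht] at hdvd
  rw [coboundary_apply, Finset.sum_eq_single p]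
  · rw [contraction_apply_of_not_mem _ hip, ← ht, ← hpq, map_smul, smul_smul,
      awayMap_awayMap hdvd (weight_face_dvd g i₀ _ _), awayMap_self, ← pow_add,
      Even.neg_one_pow ⟨_, rfl⟩, one_smul]
  · intro l _ hl
    rw [contraction_apply_of_mem _ ?_, map_zero, smul_zero]
    rw [range_face]
    exact ⟨⟨p, hp⟩, fun h => hl (t.injective (h.symm.trans hp.symm))⟩
  · exact fun h => absurd (Finset.mem_univ p) h

theorem coboundary_contraction_add_contraction_coboundary {k : ℕ}
    (z : Cochain M (g i₀ • prodWeight g) (k + 1)) :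
    coboundary M (g i₀ • prodWeight g) k (contraction M g i₀ k z) +
      contraction M g i₀ (k + 1) (coboundary M (g i₀ • prodWeight g) (k + 1) z) = z := by
  funext t
  rw [Pi.add_apply]
  by_cases hi : i₀ ∈ Set.range t
  · obtain ⟨p, hp⟩ := hi
    rw [coboundary_contraction_apply_of_mem z hp, contraction_apply_of_mem _ ⟨p, hp⟩, add_zero]
  · rw [coboundary_contraction_apply_of_not_mem z hi, contraction_coboundary_apply_of_not_mem z hi,
      add_left_comm, neg_add_cancel, add_zero]

theorem contraction_coboundary_zero (z : Cochain M (g i₀ • prodWeight g) 0) :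
    contraction M g i₀ 0 (coboundary M (g i₀ • prodWeight g) 0 z) = z := by
  funext t
  rw [contraction_coboundary_apply_of_not_mem z fun ⟨x, _⟩ => x.elim0, Finset.univ_eq_empty,
    Finset.sum_empty, add_zero]

end Contraction

section Exactness

variable {R : Type*} [CommRing R] {M : Type*} [AddCommGroup M] [Module R M]
  {ι : Type*} [LinearOrder ι] [Finite ι] {g : ι → R}

theorem exists_pow_smul_mem_range_coboundary (i₀ : ι) {j : ℕ}
    {x : Cochain M (prodWeight g) (j + 1)} (hx : coboundary M (prodWeight g) (j + 1) x = 0) :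
    ∃ K : ℕ, g i₀ ^ K • x ∈ LinearMap.range (coboundary M (prodWeight g) j) := by
  set z := localize M (g i₀) (prodWeight g) (j + 1) x
  have hz : coboundary M (g i₀ • prodWeight g) j (contraction M g i₀ j z) = z := by
    have := coboundary_contraction_add_contraction_coboundary z
    rwa [coboundary_localize (prodWeight_face_dvd g), hx, map_zero, map_zero, add_zero] at this
  obtain ⟨K, y, hy⟩ := exists_localize_eq_pow_smul (contraction M g i₀ j z)
  have h0 : localize M (g i₀) (prodWeight g) (j + 1)
      (g i₀ ^ K • x - coboundary M (prodWeight g) j y) = 0 := by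
    rw [map_sub, map_smul, ← coboundary_localize (prodWeight_face_dvd g), hy, map_smul, hz,
      sub_self]
  obtain ⟨L, hL⟩ := exists_pow_smul_eq_zero_of_localize_eq_zero h0
  rw [smul_sub, sub_eq_zero] at hL
  exact ⟨L + K, g i₀ ^ L • y, by rw [map_smul, ← hL, pow_add, mul_smul]⟩

theorem exists_pow_smul_eq_zero_of_coboundary_eq_zero (i₀ : ι)
    {x : Cochain M (prodWeight g) 0} (hx : coboundary M (prodWeight g) 0 x = 0) :
    ∃ K : ℕ, g i₀ ^ K • x = 0 := by
  apply exists_pow_smul_eq_zero_of_localize_eq_zero (c := g i₀)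
  rw [← contraction_coboundary_zero (localize M (g i₀) (prodWeight g) 0 x),
    coboundary_localize (prodWeight_face_dvd g), hx, map_zero, map_zero]

theorem mem_range_coboundary_of_coboundary_eq_zero (hg : Ideal.span (Set.range g) = ⊤) {j : ℕ}
    {x : Cochain M (prodWeight g) (j + 1)} (hx : coboundary M (prodWeight g) (j + 1) x = 0) :
    x ∈ LinearMap.range (coboundary M (prodWeight g) j) :=
  Submodule.mem_of_span_eq_top_of_smul_pow_mem _ _ hg x fun ⟨_, i, rfl⟩ =>
    exists_pow_smul_mem_range_coboundary i hx

theorem coboundary_zero_injective (hg : Ideal.span (Set.range g) = ⊤) :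
    Function.Injective (coboundary M (prodWeight g) 0) := by
  rw [← LinearMap.ker_eq_bot, eq_bot_iff]
  intro x hx
  exact Submodule.mem_of_span_eq_top_of_smul_pow_mem _ _ hg x fun ⟨_, i, rfl⟩ =>
    let ⟨K, hK⟩ := exists_pow_smul_eq_zero_of_coboundary_eq_zero i hx
    ⟨K, (Submodule.mem_bot R).2 hK⟩

end Exactness

section Augmentation

variable {R : Type*} [CommRing R] {M : Type*} [AddCommGroup M] [Module R M]

theorem mkLinearMap_bijective_of_eq_one {a : R} (ha : a = 1) :
    Function.Bijective (mkLinearMap (Submonoid.powers a) M) := by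
  subst ha
  refine ⟨fun m m' h => ?_, fun y => ?_⟩
  · obtain ⟨⟨_, r, rfl⟩, hc⟩ :=
      (IsLocalizedModule.eq_iff_exists (Submonoid.powers (1 : R)) _).1 h
    simpa using hc
  · obtain ⟨⟨m, _, r, rfl⟩, hy⟩ :=
      IsLocalizedModule.surj (Submonoid.powers (1 : R)) (mkLinearMap _ M) y
    exact ⟨m, by simpa using hy.symm⟩

theorem bijective_const_mk_one {ι : Type*} [LinearOrder ι] (g : ι → R) :
    Function.Bijective fun m : M => (fun _ => mk m 1 : Cochain M (prodWeight g) 0) := by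
  let s₀ : Fin 0 ↪o ι := OrderEmbedding.ofIsEmpty
  have hs : ∀ s : Fin 0 ↪o ι, s = s₀ := fun s => DFunLike.ext _ _ fun x => x.elim0
  have hbij := mkLinearMap_bijective_of_eq_one (M := M) (Fin.prod_univ_zero fun i => g (s₀ i))
  refine ⟨fun m m' h => hbij.1 (congrFun h s₀), fun y => ?_⟩
  obtain ⟨m, hm⟩ := hbij.2 (y s₀)
  exact ⟨m, funext fun s => by obtain rfl := hs s; exact hm⟩

end Augmentation

section Comparison

variable {R : Type u} [CommRing R] (n : ℕ) (g : Fin (n + 1) → R) (M : Type u) [AddCommGroup M]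
  [Module R M]

theorem locTrans_eq_awayMap {a b : R} (h : a ∣ b) : locTrans M a b h = awayMap M a b := by
  rw [awayMap, dif_pos ⟨1, (pow_one b).symm ▸ h⟩]
  rfl

theorem cechD_eq_coboundary (k : ℕ) : cechD n g M k = coboundary M (prodWeight g) (k + 1) := by
  funext x t
  unfold cechD
  rw [coboundary_apply (M := M) (w := prodWeight g) x t]
  refine Finset.sum_congr rfl fun l _ => ?_
  rw [locTrans_eq_awayMap, ← Int.cast_smul_eq_zsmul R]
  push_cast
  rfl

theorem cechEps_eq_coboundary (m : M) :
    cechEps n g M m = coboundary M (prodWeight g) 0 (fun _ => mk m 1) := by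
  funext t
  rw [coboundary_apply, Fin.sum_univ_one, Fin.val_zero, pow_zero, one_smul,
    awayMap_mk_one (dvd_pow (prodWeight_face_dvd g 0 0 t) one_ne_zero)]
  rfl

end Comparison

end Cech

open Cech

/-- Let `R` be a commutative ring, `g₀, …, g_n ∈ R` elements generating the unit ideal, and
`M` any `R`-module.  Then the extended ordered Čech complex
`0 → M → ∏ᵢ M_{gᵢ} → ∏_{i<j} M_{gᵢgⱼ} → ⋯ → M_{g₀⋯g_n} → 0` is exact: the augmentation is
injective, and at each degree the kernel of the differential is the image of the previous
map. -/
theorem stmt_5 {R : Type u} [CommRing R] (n : ℕ) (g : Fin (n + 1) → R)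
    (hunit : Ideal.span (Set.range g) = ⊤)
    (M : Type u) [AddCommGroup M] [Module R M] :
    Function.Injective (cechEps n g M) ∧
    (∀ x : CechComponent n g M 0, cechD n g M 0 x = 0 ↔ ∃ m : M, cechEps n g M m = x) ∧
    (∀ (k : ℕ) (x : CechComponent n g M (k + 1)),
      cechD n g M (k + 1) x = 0 ↔ ∃ y : CechComponent n g M k, cechD n g M k y = x) := by
  have hd := cechD_eq_coboundary n g M
  have he := cechEps_eq_coboundary n g M
  obtain ⟨hmk_inj, hmk_surj⟩ := bijective_const_mk_one (M := M) g
  refine ⟨fun m m' h => hmk_inj (coboundary_zero_injective hunit ?_),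
    fun x => ⟨fun hx => ?_, ?_⟩, fun k x => ⟨fun hx => ?_, ?_⟩⟩
  · rwa [he, he] at h
  · rw [hd] at hx
    obtain ⟨y, rfl⟩ := mem_range_coboundary_of_coboundary_eq_zero hunit hx
    obtain ⟨m, rfl⟩ := hmk_surj y
    exact ⟨m, he m⟩
  · rintro ⟨m, rfl⟩
    rw [hd, he, coboundary_coboundary (prodWeight_face_dvd g)]
  · rw [hd] at hx
    obtain ⟨y, rfl⟩ := mem_range_coboundary_of_coboundary_eq_zero hunit hx
    exact ⟨y, congrFun (hd k) y⟩
  · rintro ⟨y, rfl⟩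
    rw [hd, hd, coboundary_coboundary (prodWeight_face_dvd g)]
end

section
/- Let k be a field, A a finite-dimensional associative k-algebra, I an injective A-module, and l any field extension of k. Then l ⊗_k I is an injective module over the l-algebra l ⊗_k A. -/
/-!
If `k` is a field, an `A`-module `M` is injective as soon as the coinduction map
`M → Hom_k(A, M)`, `m ↦ (a ↦ a • m)`, has an `A`-linear retraction `r`: a map `g` on a left ideal
`J` extends `k`-linearly to some `ψ : A → M`, and then `a ↦ a • r ψ` extends `g` `A`-linearly.
Conversely an injective `I` has such a retraction, being a submodule of `Hom_k(A, I)`. The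
retraction survives base change: as `A` is finite free over `k`,
`Hom_l(l ⊗ A, l ⊗ I) = Hom_k(A, l ⊗ I) ≅ l ⊗ Hom_k(A, I)`, and `l ⊗ r` is a retraction for `l ⊗ I`.
-/

open TensorProduct
open LinearMap (mulRight lcomp lcomp_apply' toSpanSingleton toSpanSingleton_apply exists_extend
  liftBaseChangeEquiv)

universe u

/-- Hochschild's relative injectivity, in the form of an equivariant retraction `r` of
`m ↦ (b ↦ b • m)`; here `B` acts on `Hom_l(B, M)` by `(b • φ) x = φ (x * b)`. -/
def Module.IsRelativelyInjective (l B M : Type*) [CommSemiring l] [Semiring B] [Algebra l B]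
    [AddCommMonoid M] [Module l M] [Module B M] [IsScalarTower l B M] : Prop :=
  ∃ r : (B →ₗ[l] M) →+ M, (∀ φ b, r (φ ∘ₗ mulRight l b) = b • r φ) ∧
    ∀ m, r ((toSpanSingleton B M m).restrictScalars l) = m

theorem Module.IsRelativelyInjective.injective {l B M : Type*} [Field l] [Ring B] [Algebra l B]
    [AddCommGroup M] [Module l M] [Module B M] [IsScalarTower l B M]
    (hM : Module.IsRelativelyInjective l B M) : Module.Injective B M := by
  obtain ⟨r, hr_mul, hr_coind⟩ := hM
  refine Module.Baer.injective fun J g => ?_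
  obtain ⟨ψ, hψ⟩ := exists_extend (p := J.restrictScalars l) (g.restrictScalars l)
  refine ⟨toSpanSingleton B M (r ψ), fun b hb => ?_⟩
  have hψb : ψ ∘ₗ mulRight l b = (toSpanSingleton B M (g ⟨b, hb⟩)).restrictScalars l := by
    ext x
    calc ψ (x * b) = g (x • ⟨b, hb⟩) := LinearMap.congr_fun hψ ⟨x * b, J.mul_mem_left x hb⟩
      _ = x • g ⟨b, hb⟩ := g.map_smul x ⟨b, hb⟩
  rw [toSpanSingleton_apply, ← hr_mul, hψb, hr_coind]

theorem map_smul_of_map_comp_mulRight {l B M : Type*} [CommSemiring l] [Semiring B] [Algebra l B]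
    [AddCommMonoid M] [Module l M] [Module B M] [IsScalarTower l B M]
    (r : (B →ₗ[l] M) →+ M) (hr : ∀ φ b, r (φ ∘ₗ mulRight l b) = b • r φ)
    (c : l) (φ : B →ₗ[l] M) : r (c • φ) = c • r φ := by
  have : c • φ = φ ∘ₗ mulRight l (algebraMap l B c) := by
    ext x
    simp [← Algebra.commutes, ← Algebra.smul_def]
  rw [this, hr, algebraMap_smul]

/-- `Module.Injective R Q` only tests extensions along modules in the universe of `Q`. -/
theorem Module.Injective.exists_leftInverse_of_small {R Y : Type*} {Q : Type u} [Ring R]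
    [AddCommGroup Q] [Module R Q] [AddCommGroup Y] [Module R Y] [Small.{u} Y]
    (hQ : Module.Injective R Q) (f : Q →ₗ[R] Y) (hf : Function.Injective f) :
    ∃ g : Y →ₗ[R] Q, g ∘ₗ f = LinearMap.id := by
  let e := Shrink.linearEquiv R Y
  obtain ⟨g, hg⟩ := hQ.out (e.symm.toLinearMap ∘ₗ f) (by simpa using e.symm.injective.comp hf)
    LinearMap.id
  exact ⟨g ∘ₗ e.symm.toLinearMap, LinearMap.ext hg⟩

/-- A type synonym: `A →ₗ[k] I` already carries the action `(a • φ) x = a • φ x` on the target. -/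
def Coinduced (k A I : Type*) [CommSemiring k] [Semiring A] [Algebra k A] [AddCommMonoid I]
    [Module k I] : Type _ :=
  A →ₗ[k] I

namespace Coinduced

variable (k A : Type*) (I : Type u) [CommRing k] [Ring A] [Algebra k A] [AddCommGroup I]
  [Module k I]

instance : AddCommGroup (Coinduced k A I) := inferInstanceAs (AddCommGroup (A →ₗ[k] I))

def ofHom : (A →ₗ[k] I) ≃+ Coinduced k A I := AddEquiv.refl _

instance : SMul A (Coinduced k A I) :=
  ⟨fun a φ => ofHom k A I ((ofHom k A I).symm φ ∘ₗ mulRight k a)⟩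

variable {k A I}

theorem smul_ofHom (a : A) (φ : A →ₗ[k] I) :
    a • ofHom k A I φ = ofHom k A I (φ ∘ₗ mulRight k a) :=
  rfl

theorem ofHom_symm_smul_apply (a : A) (φ : Coinduced k A I) (x : A) :
    (ofHom k A I).symm (a • φ) x = (ofHom k A I).symm φ (x * a) :=
  rfl

variable (k A I)

instance : Module A (Coinduced k A I) where
  one_smul φ := (ofHom k A I).symm.injective <| LinearMap.ext fun x => by
    rw [ofHom_symm_smul_apply, mul_one]
  mul_smul a b φ := (ofHom k A I).symm.injective <| LinearMap.ext fun x => by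
    rw [ofHom_symm_smul_apply, ofHom_symm_smul_apply, ofHom_symm_smul_apply, mul_assoc]
  smul_zero _ := rfl
  smul_add _ _ _ := rfl
  add_smul a b φ := (ofHom k A I).symm.injective <| LinearMap.ext fun x => by
    rw [ofHom_symm_smul_apply, map_add, LinearMap.add_apply, ofHom_symm_smul_apply,
      ofHom_symm_smul_apply, mul_add, map_add]
  zero_smul φ := (ofHom k A I).symm.injective <| LinearMap.ext fun x => by
    rw [ofHom_symm_smul_apply, mul_zero, map_zero, map_zero, LinearMap.zero_apply]

instance [Module.Free k A] [Module.Finite k A] : Small.{u} (Coinduced k A I) :=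
  small_map ((Module.Free.chooseBasis k A).constr k).symm.toEquiv

variable [Module A I] [IsScalarTower k A I]

def coind : I →ₗ[A] Coinduced k A I where
  toFun v := ofHom k A I ((toSpanSingleton A I v).restrictScalars k)
  map_add' v w := by
    rw [← map_add]
    congr 1
    ext x
    exact smul_add x v w
  map_smul' a v := by
    rw [RingHom.id_apply, smul_ofHom]
    congr 1
    ext x
    exact (mul_smul x a v).symm

theorem coind_injective : Function.Injective (coind k A I) := fun v w h => by
  have h1 : (1 : A) • v = (1 : A) • w := LinearMap.congr_fun (congrArg (ofHom k A I).symm h) 1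
  simpa using h1

end Coinduced

theorem Module.Injective.isRelativelyInjective (k : Type*) {A : Type*} {I : Type u} [CommRing k]
    [Ring A] [Algebra k A] [Module.Free k A] [Module.Finite k A] [AddCommGroup I] [Module k I]
    [Module A I] [IsScalarTower k A I] (hI : Module.Injective A I) :
    Module.IsRelativelyInjective k A I := by
  obtain ⟨g, hg⟩ := hI.exists_leftInverse_of_small _ (Coinduced.coind_injective k A I)
  refine ⟨g.toAddMonoidHom.comp (Coinduced.ofHom k A I).toAddMonoidHom, fun φ a => ?_,
    fun v => LinearMap.congr_fun hg v⟩
  simp [← Coinduced.smul_ofHom]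

namespace TensorProduct

variable {R M M' P Q : Type*} [CommSemiring R] [AddCommMonoid M] [AddCommMonoid M']
  [AddCommMonoid P] [AddCommMonoid Q] [Module R M] [Module R M'] [Module R P] [Module R Q]

theorem lTensorHomToHomLTensor_lTensor_lcomp (f : M' →ₗ[R] M) (T : P ⊗[R] (M →ₗ[R] Q)) :
    lTensorHomToHomLTensor (.id R) M' P Q ((lcomp R Q f).lTensor P T) =
      lTensorHomToHomLTensor (.id R) M P Q T ∘ₗ f := by
  induction T using TensorProduct.induction_on with
  | zero => simp
  | tmul p g => ext; simp
  | add T T' hT hT' => simp only [map_add, hT, hT', LinearMap.add_comp]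

theorem lTensorHomToHomLTensor_smul {S : Type*} [CommSemiring S] [Algebra R S] (c : S)
    (T : S ⊗[R] (M →ₗ[R] Q)) :
    lTensorHomToHomLTensor (.id R) M S Q (c • T) = c • lTensorHomToHomLTensor (.id R) M S Q T := by
  induction T using TensorProduct.induction_on with
  | zero => simp
  | tmul p g => ext; simp [smul_tmul']
  | add T T' hT hT' => simp only [smul_add, map_add, hT, hT']

end TensorProduct

section BaseChange

variable {k A I : Type*} [CommRing k] [Ring A] [Algebra k A] [AddCommGroup I] [Module k I]
  (l : Type*) [CommRing l] [Algebra k l]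

noncomputable def baseChangeRetraction [Module.Projective k A] [Module.Finite k A]
    (r : (A →ₗ[k] I) →ₗ[k] I) : (l ⊗[k] A →ₗ[l] l ⊗[k] I) →+ l ⊗[k] I :=
  (r.baseChange l).toAddMonoidHom.comp <|
    (lTensorHomEquivHomLTensor k A l I).symm.toAddMonoidHom.comp
      (liftBaseChangeEquiv l).symm.toAddMonoidHom

theorem baseChangeRetraction_apply [Module.Projective k A] [Module.Finite k A]
    (r : (A →ₗ[k] I) →ₗ[k] I) (Φ : l ⊗[k] A →ₗ[l] l ⊗[k] I) :
    baseChangeRetraction l r Φ =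
      r.baseChange l ((lTensorHomEquivHomLTensor k A l I).symm ((liftBaseChangeEquiv l).symm Φ)) :=
  rfl

variable [Module A I] [Module (l ⊗[k] A) (l ⊗[k] I)]

theorem baseChange_lTensor_lcomp_mulRight (r : (A →ₗ[k] I) →ₗ[k] I)
    (hr : ∀ φ a, r (φ ∘ₗ mulRight k a) = a • r φ)
    (hcompat : ∀ (c : l) (a : A) (x : l) (i : I),
      (c ⊗ₜ[k] a) • (x ⊗ₜ[k] i) = (c * x) ⊗ₜ[k] (a • i)) (a : A) (T : l ⊗[k] (A →ₗ[k] I)) :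
    r.baseChange l ((lcomp k I (mulRight k a)).lTensor l T) =
      ((1 : l) ⊗ₜ[k] a) • r.baseChange l T := by
  induction T using TensorProduct.induction_on with
  | zero => simp
  | tmul c φ => simp [lcomp_apply', hr, hcompat]
  | add T T' hT hT' => simp only [map_add, smul_add, hT, hT']

variable [Module.Projective k A] [Module.Finite k A] [IsScalarTower l (l ⊗[k] A) (l ⊗[k] I)]

theorem baseChangeRetraction_comp_mulRight (r : (A →ₗ[k] I) →ₗ[k] I)
    (hr : ∀ φ a, r (φ ∘ₗ mulRight k a) = a • r φ)
    (hcompat : ∀ (c : l) (a : A) (x : l) (i : I),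
      (c ⊗ₜ[k] a) • (x ⊗ₜ[k] i) = (c * x) ⊗ₜ[k] (a • i))
    (Φ : l ⊗[k] A →ₗ[l] l ⊗[k] I) (b : l ⊗[k] A) :
    baseChangeRetraction l r (Φ ∘ₗ mulRight l b) = b • baseChangeRetraction l r Φ := by
  induction b using TensorProduct.induction_on with
  | zero => simp
  | tmul c a =>
    set e := lTensorHomEquivHomLTensor k A l I
    have h_restrict : (liftBaseChangeEquiv l).symm (Φ ∘ₗ mulRight l (c ⊗ₜ a)) =
        e (c • (lcomp k I (mulRight k a)).lTensor l (e.symm ((liftBaseChangeEquiv l).symm Φ))) := by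
      rw [lTensorHomEquivHomLTensor_apply, lTensorHomToHomLTensor_smul,
        lTensorHomToHomLTensor_lTensor_lcomp, ← lTensorHomEquivHomLTensor_apply, e.apply_symm_apply]
      ext x
      simp [← map_smul, smul_tmul']
    rw [baseChangeRetraction_apply, baseChangeRetraction_apply, h_restrict, e.symm_apply_apply,
      map_smul, baseChange_lTensor_lcomp_mulRight l r hr hcompat, ← smul_assoc, smul_tmul',
      smul_eq_mul, mul_one]
  | add b b' hb hb' =>
    have : Φ ∘ₗ mulRight l (b + b') = Φ ∘ₗ mulRight l b + Φ ∘ₗ mulRight l b' := by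
      ext x
      simp [mul_add]
    rw [this, map_add, hb, hb', add_smul]

theorem baseChangeRetraction_toSpanSingleton [IsScalarTower k A I] (r : (A →ₗ[k] I) →ₗ[k] I)
    (hr : ∀ v, r ((toSpanSingleton A I v).restrictScalars k) = v)
    (hcompat : ∀ (c : l) (a : A) (x : l) (i : I),
      (c ⊗ₜ[k] a) • (x ⊗ₜ[k] i) = (c * x) ⊗ₜ[k] (a • i)) (m : l ⊗[k] I) :
    baseChangeRetraction l r ((toSpanSingleton (l ⊗[k] A) (l ⊗[k] I) m).restrictScalars l) = m := by
  induction m using TensorProduct.induction_on with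
  | zero => simp
  | tmul c v =>
    have h_restrict :
        (liftBaseChangeEquiv l).symm ((toSpanSingleton _ _ (c ⊗ₜ v)).restrictScalars l) =
          lTensorHomEquivHomLTensor k A l I (c ⊗ₜ (toSpanSingleton A I v).restrictScalars k) := by
      ext x
      simp [hcompat]
    rw [baseChangeRetraction_apply, h_restrict, LinearEquiv.symm_apply_apply,
      LinearMap.baseChange_tmul, hr]
  | add m m' hm hm' =>
    have : (toSpanSingleton (l ⊗[k] A) (l ⊗[k] I) (m + m')).restrictScalars l =
        (toSpanSingleton _ _ m).restrictScalars l + (toSpanSingleton _ _ m').restrictScalars l := by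
      ext x
      simp
    rw [this, map_add, hm, hm']

theorem Module.IsRelativelyInjective.baseChange [IsScalarTower k A I]
    (hI : Module.IsRelativelyInjective k A I)
    (hcompat : ∀ (c : l) (a : A) (x : l) (i : I),
      (c ⊗ₜ[k] a) • (x ⊗ₜ[k] i) = (c * x) ⊗ₜ[k] (a • i)) :
    Module.IsRelativelyInjective l (l ⊗[k] A) (l ⊗[k] I) := by
  obtain ⟨r, hr_mul, hr_coind⟩ := hI
  let rk : (A →ₗ[k] I) →ₗ[k] I := { r with map_smul' := map_smul_of_map_comp_mulRight r hr_mul }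
  exact ⟨baseChangeRetraction l rk, baseChangeRetraction_comp_mulRight l rk hr_mul hcompat,
    baseChangeRetraction_toSpanSingleton l rk hr_coind hcompat⟩

end BaseChange

theorem isScalarTower_of_tmul_smul_tmul {k A I l : Type*} [CommRing k] [Ring A] [Algebra k A]
    [AddCommGroup I] [Module k I] [Module A I] [CommRing l] [Algebra k l]
    [Module (l ⊗[k] A) (l ⊗[k] I)]
    (hcompat : ∀ (c : l) (a : A) (x : l) (i : I),
      (c ⊗ₜ[k] a) • (x ⊗ₜ[k] i) = (c * x) ⊗ₜ[k] (a • i)) :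
    IsScalarTower l (l ⊗[k] A) (l ⊗[k] I) := by
  refine ⟨fun c b m => ?_⟩
  rw [Algebra.smul_def, mul_smul, Algebra.TensorProduct.algebraMap_apply, Algebra.algebraMap_self,
    RingHom.id_apply]
  induction b • m using TensorProduct.induction_on with
  | zero => simp
  | tmul x v => rw [hcompat, one_smul, smul_tmul', smul_eq_mul]
  | add y z hy hz => rw [smul_add, smul_add, hy, hz]

/-- Let `k` be a field, `A` a finite-dimensional associative `k`-algebra, `I` an injective
(left) `A`-module, and `l` any field extension of `k`.  Then `l ⊗_k I` is an injective module
over the `l`-algebra `l ⊗_k A`.  (The module structure of `l ⊗[k] A` on `l ⊗[k] I` is the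
canonical one, characterized on pure tensors by `(c ⊗ₜ a) • (x ⊗ₜ i) = (c * x) ⊗ₜ (a • i)`;
here it is taken as a hypothesis, together with this characterization.) -/
theorem stmt_12 (k : Type*) [Field k] (A : Type*) [Ring A] [Algebra k A]
    [FiniteDimensional k A]
    (I : Type*) [AddCommGroup I] [Module A I] [Module k I] [IsScalarTower k A I]
    (hI : Module.Injective A I)
    (l : Type*) [Field l] [Algebra k l]
    [inst : Module (l ⊗[k] A) (l ⊗[k] I)]
    (hcompat : ∀ (c : l) (a : A) (x : l) (i : I),
      (c ⊗ₜ[k] a) • (x ⊗ₜ[k] i) = (c * x) ⊗ₜ[k] (a • i)) :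
    Module.Injective (l ⊗[k] A) (l ⊗[k] I) := by
  have := isScalarTower_of_tmul_smul_tmul hcompat
  exact ((hI.isRelativelyInjective k).baseChange l hcompat).injective
end

section
/- Let C be an abelian category and Pro(C) its pro-category. If X is an injective object of C, then X remains injective when regarded as an object of Pro(C). -/
/-!
A monomorphism `ι X ⟶ lim_i ι (F i)` is already a monomorphism `X ⟶ F k` at some level `k`:
the kernels of the components `X ⟶ F i` form a pro-object whose maps to `ι X` vanish, because
they vanish after composing with the monomorphism; as `Hom(lim_i ι (K i), ι X)` is the colimit of
the `Hom(K i, ι X)`, one of the inclusions `K k ⟶ X` is already zero. If `X` is injective, that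
level-wise monomorphism splits, hence so does every monomorphism out of `ι X`, and an object of an
abelian category all of whose monomorphisms split is injective.
-/

open CategoryTheory Limits

universe w v u v' u'

/-- An axiomatization of the pro-category `Pro(C)` of an abelian category `C`: an abelian
category `P` together with a fully faithful exact embedding `ι : C ⥤ P` such that `P` has
cofiltered limits, every object of `P` is a (small) cofiltered limit of objects of `C`, and
for every cofiltered limit `"lim"_I F` of objects of `C` and every object `X` of `C` one has
`Hom_P("lim"_I F, ι X) = colim_{Iᵒᵖ} Hom_C(F i, X)` (expressed elementwise in the fields
`hom_surj` and `hom_inj`). -/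
structure ProData (C : Type u) [Category.{v} C] [Abelian C]
    (P : Type u') [Category.{v'} P] [Abelian P] : Type (max u v u' v' (v+1)) where
  ι : C ⥤ P
  full : ι.Full
  faithful : ι.Faithful
  exact_left : Nonempty (PreservesFiniteLimits ι)
  exact_right : Nonempty (PreservesFiniteColimits ι)
  hasCofilteredLimits : ∀ (I : Cat.{v, v}), IsCofiltered I → ∀ F : I ⥤ P, HasLimit F
  hom_surj : ∀ (I : Cat.{v, v}), IsCofiltered I → ∀ (F : I ⥤ C)
    (c : Cone (F ⋙ ι)), IsLimit c → ∀ (X : C) (f : c.pt ⟶ ι.obj X),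
      ∃ (i : I) (g : F.obj i ⟶ X), f = c.π.app i ≫ ι.map g
  hom_inj : ∀ (I : Cat.{v, v}), IsCofiltered I → ∀ (F : I ⥤ C)
    (c : Cone (F ⋙ ι)), IsLimit c → ∀ (X : C) (i j : I)
    (g : F.obj i ⟶ X) (h : F.obj j ⟶ X),
      c.π.app i ≫ ι.map g = c.π.app j ≫ ι.map h →
      ∃ (k : I) (a : k ⟶ i) (b : k ⟶ j), F.map a ≫ g = F.map b ≫ h
  presentation : ∀ Y : P, ∃ (I : Cat.{v, v}) (_ : IsCofiltered I) (F : I ⥤ C)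
    (c : Cone (F ⋙ ι)), Nonempty (IsLimit c) ∧ Nonempty (c.pt ≅ Y)

namespace CategoryTheory.Injective

variable {A : Type*} [Category A] [Abelian A]

theorem of_forall_mono_exists_retraction {J : A}
    (h : ∀ {Y : A} (m : J ⟶ Y) [Mono m], ∃ r : Y ⟶ J, m ≫ r = 𝟙 J) : Injective J where
  factors g f _ := by
    obtain ⟨r, hr⟩ := h (pushout.inr f g)
    exact ⟨pushout.inl f g ≫ r, by rw [pushout.condition_assoc, hr, Category.comp_id]⟩

end CategoryTheory.Injective

namespace CategoryTheory.Limits.Cone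

variable {C : Type u} [Category.{v} C] {I : Type*} [Category I] {F : I ⥤ C}

section

variable [HasZeroMorphisms C] [HasKernels C]

noncomputable def kernelDiagram (s : Cone F) : I ⥤ C where
  obj i := kernel (s.π.app i)
  map {i j} a := kernel.lift _ (kernel.ι _) (by rw [← s.w a, kernel.condition_assoc, zero_comp])

noncomputable def kernelι (s : Cone F) (i : I) : s.kernelDiagram.obj i ⟶ s.pt :=
  kernel.ι (s.π.app i)

@[simp]
theorem kernelDiagram_map_kernelι (s : Cone F) {i j : I} (a : i ⟶ j) :
    s.kernelDiagram.map a ≫ s.kernelι j = s.kernelι i :=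
  kernel.lift_ι _ _ _

theorem kernelι_π_app (s : Cone F) (i : I) : s.kernelι i ≫ s.π.app i = 0 :=
  kernel.condition (s.π.app i)

end

theorem mono_π_app_of_kernelι_eq_zero [Preadditive C] [HasKernels C] (s : Cone F)
    {i : I} (h : s.kernelι i = 0) : Mono (s.π.app i) :=
  Preadditive.mono_of_kernel_zero h

end CategoryTheory.Limits.Cone

namespace ProData

variable {C : Type u} [Category.{v} C] [Abelian C] {P : Type u'} [Category.{v'} P] [Abelian P]
  (D : ProData C P)

instance : D.ι.Full := D.full

instance : D.ι.Faithful := D.faithful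

instance : D.ι.Additive := by
  obtain ⟨_⟩ := D.exact_left
  exact Functor.additive_of_preserves_binary_products _

noncomputable def coneOfHom {I : Type*} [Category I] {F : I ⥤ C} (c : Cone (F ⋙ D.ι)) {X : C}
    (f : D.ι.obj X ⟶ c.pt) : Cone F where
  pt := X
  π :=
    { app i := D.ι.preimage (f ≫ c.π.app i)
      naturality i j a := D.ι.map_injective (by
        simp only [Functor.map_comp, Functor.map_preimage]
        simpa using (f ≫= c.w a).symm) }

theorem map_coneOfHom_π_app {I : Type*} [Category I] {F : I ⥤ C} (c : Cone (F ⋙ D.ι)) {X : C}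
    (f : D.ι.obj X ⟶ c.pt) (i : I) : D.ι.map ((D.coneOfHom c f).π.app i) = f ≫ c.π.app i :=
  D.ι.map_preimage _

theorem exists_mono_π_app_of_mono {I : Cat.{v, v}} [IsCofiltered I] {F : I ⥤ C}
    {c : Cone (F ⋙ D.ι)} (hc : IsLimit c) (s : Cone F) (f : D.ι.obj s.pt ⟶ c.pt) [hf : Mono f]
    (hs : ∀ i, D.ι.map (s.π.app i) = f ≫ c.π.app i) : ∃ i, Mono (s.π.app i) := by
  have := D.hasCofilteredLimits I inferInstance (s.kernelDiagram ⋙ D.ι)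
  let L := limit.cone (s.kernelDiagram ⋙ D.ι)
  have hL : ∀ i, L.π.app i ≫ D.ι.map (s.kernelι i) = 0 := by
    intro i
    rw [← cancel_mono f, zero_comp]
    refine hc.hom_ext fun j => ?_
    obtain ⟨k, a, b, -⟩ := IsCofilteredOrEmpty.cone_objs i j
    have hk : D.ι.map (s.kernelι k) ≫ f ≫ c.π.app j = 0 := by
      rw [← hs, ← s.w b, ← Functor.map_comp, ← Category.assoc, s.kernelι_π_app, zero_comp,
        Functor.map_zero]
    rw [← L.w a]
    simp [← Functor.map_comp_assoc, hk]
  obtain ⟨i⟩ := IsCofiltered.nonempty (C := I)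
  obtain ⟨k, a, _, hk⟩ := D.hom_inj I inferInstance _ L (limit.isLimit _) s.pt i i
    (s.kernelι i) 0 ((hL i).trans (by simp))
  rw [s.kernelDiagram_map_kernelι, comp_zero] at hk
  exact ⟨k, s.mono_π_app_of_kernelι_eq_zero hk⟩

theorem exists_mono_preimage_comp_π_app {I : Cat.{v, v}} [IsCofiltered I] {F : I ⥤ C}
    {c : Cone (F ⋙ D.ι)} (hc : IsLimit c) {X : C} (f : D.ι.obj X ⟶ c.pt) [Mono f] :
    ∃ i, Mono (D.ι.preimage (f ≫ c.π.app i)) :=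
  -- instance search does not unfold `(D.coneOfHom c f).pt` to `X`, hence the explicit `hf`
  D.exists_mono_π_app_of_mono hc (D.coneOfHom c f) f (D.map_coneOfHom_π_app c f) (hf := ‹_›)

theorem exists_retraction_of_mono {X : C} [Injective X] {Y : P} (m : D.ι.obj X ⟶ Y) [Mono m] :
    ∃ r : Y ⟶ D.ι.obj X, m ≫ r = 𝟙 _ := by
  obtain ⟨I, _, F, c, ⟨hc⟩, ⟨e⟩⟩ := D.presentation Y
  obtain ⟨k, _⟩ := D.exists_mono_preimage_comp_π_app hc (m ≫ e.inv)
  let u := D.ι.preimage ((m ≫ e.inv) ≫ c.π.app k)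
  have hu : D.ι.map u = (m ≫ e.inv) ≫ c.π.app k := D.ι.map_preimage _
  refine ⟨e.inv ≫ c.π.app k ≫ D.ι.map (Injective.factorThru (𝟙 X) u), ?_⟩
  calc m ≫ e.inv ≫ c.π.app k ≫ D.ι.map (Injective.factorThru (𝟙 X) u)
      = D.ι.map (u ≫ Injective.factorThru (𝟙 X) u) := by
        rw [D.ι.map_comp, hu, Category.assoc, Category.assoc]
    _ = 𝟙 _ := by rw [Injective.comp_factorThru, D.ι.map_id]

end ProData

/-- Let `C` be an abelian category and `Pro(C)` its pro-category.  If `X` is an injective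
object of `C`, then `X` remains injective when regarded as an object of `Pro(C)`. -/
theorem stmt_13 {C : Type u} [Category.{v} C] [Abelian C]
    {P : Type u'} [Category.{v'} P] [Abelian P] (D : ProData C P)
    (X : C) (hX : Injective X) :
    Injective (D.ι.obj X) :=
  Injective.of_forall_mono_exists_retraction fun m _ => D.exists_retraction_of_mono m
end

section
/- Let C be an abelian category and let Y → Z be a morphism in Pro(C) with the following property: for every morphism Y → Y′ with Y′ an object of C, there is a commutative square with top row Y → Z, left column Y → Y′, bottom row a monomorphism Y′ → Z′ in Pro(C), and right column Z → Z′. Then Y → Z is a monomorphism in Pro(C). -/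
/-! The projections of a presentation `Y ≅ "lim"_I Y_i` are jointly monic, and each of them
factors `φ` followed by some `w` through a monomorphism; so two maps equalized by `φ` agree after
every projection, hence agree. -/

open CategoryTheory Limits

universe w v u v' u'

lemma mono_of_jointlyMono_of_squares {P : Type*} [Category P] {Y Z : P} (φ : Y ⟶ Z)
    {J : Type*} {Y' : J → P} (u : ∀ j, Y ⟶ Y' j)
    (hu : ∀ {T : P} (g h : T ⟶ Y), (∀ j, g ≫ u j = h ≫ u j) → g = h)
    (hsq : ∀ j, ∃ (Z' : P) (v : Y' j ⟶ Z') (w : Z ⟶ Z'), Mono v ∧ u j ≫ v = φ ≫ w) :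
    Mono φ where
  right_cancellation g h hgh := hu g h fun j => by
    obtain ⟨Z', v, w, hv, hcomm⟩ := hsq j
    rw [← cancel_mono v, Category.assoc, Category.assoc, hcomm, reassoc_of% hgh]

lemma IsLimit.hom_ext_of_iso {P : Type*} [Category P] {I : Type*} [Category I]
    {F : I ⥤ P} {c : Cone F} (hc : IsLimit c) {Y : P} (e : c.pt ≅ Y) {T : P} (g h : T ⟶ Y)
    (hgh : ∀ i, g ≫ e.inv ≫ c.π.app i = h ≫ e.inv ≫ c.π.app i) : g = h := by
  rw [← cancel_mono e.inv]
  exact hc.hom_ext fun i => by simpa only [Category.assoc] using hgh i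

/-- Let `C` be an abelian category and let `Y ⟶ Z` be a morphism in `Pro(C)` with the
following property: for every morphism `Y ⟶ Y′` with `Y′` an object of `C`, there is a
commutative square with top row `Y ⟶ Z`, left column `Y ⟶ Y′`, bottom row a monomorphism
`Y′ ⟶ Z′` in `Pro(C)`, and right column `Z ⟶ Z′`.  Then `Y ⟶ Z` is a monomorphism in
`Pro(C)`. -/
theorem stmt_17 {C : Type u} [Category.{v} C] [Abelian C]
    {P : Type u'} [Category.{v'} P] [Abelian P] (D : ProData C P)
    {Y Z : P} (φ : Y ⟶ Z)
    (hsq : ∀ (Y' : C) (u : Y ⟶ D.ι.obj Y'),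
      ∃ (Z' : P) (v : D.ι.obj Y' ⟶ Z') (w : Z ⟶ Z'), Mono v ∧ u ≫ v = φ ≫ w) :
    Mono φ := by
  obtain ⟨I, -, F, c, ⟨hc⟩, ⟨e⟩⟩ := D.presentation Y
  exact mono_of_jointlyMono_of_squares φ (fun i => e.inv ≫ c.π.app i)
    (IsLimit.hom_ext_of_iso hc e) (fun i => hsq (F.obj i) _)
end

section
/- Let C be an abelian category and C₀ ⊆ C a full abelian subcategory closed under the formation of subobjects in C (for instance, a Serre subcategory). Then the left adjoint X ↦ X̂ of the inclusion Pro(C₀) ↪ Pro(C), evaluated on an object X of C, is naturally isomorphic to the pro-object "lim" X′, where X′ ranges over the cofiltered directed set of quotients of X lying in C₀, with transition maps the induced quotient maps. -/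
open CategoryTheory Limits

universe w v u v' u'

universe v'' u''

open ZeroObject

variable {C : Type u} [Category.{v} C]

/-- The cofiltered system of quotients of `X` lying in the full subcategory determined by
`P₀`: objects are epimorphisms `X ⟶ X′` with `P₀ X′`, and morphisms are the induced
(quotient) maps under `X`. -/
structure QuotIndex (P₀ : C → Prop) (X : C) : Type max u v where
  obj : ObjectProperty.FullSubcategory P₀
  e : X ⟶ obj.obj
  epi : Epi e

instance (P₀ : C → Prop) (X : C) : Category (QuotIndex P₀ X) where
  Hom A B := {f : A.obj.obj ⟶ B.obj.obj // A.e ≫ f = B.e}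
  id A := ⟨𝟙 A.obj.obj, Category.comp_id _⟩
  comp f g := ⟨f.1 ≫ g.1, by rw [← Category.assoc, f.2, g.2]⟩
  id_comp f := Subtype.ext (Category.id_comp f.1)
  comp_id f := Subtype.ext (Category.comp_id f.1)
  assoc f g h := Subtype.ext (Category.assoc f.1 g.1 h.1)

/-- The diagram of quotients of `X` lying in the full subcategory determined by `P₀`,
with transition maps the induced quotient maps. -/
def quotDiagram (P₀ : C → Prop) (X : C) : QuotIndex P₀ X ⥤ ObjectProperty.FullSubcategory P₀ where
  obj A := A.obj
  map f := ⟨f.1⟩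

/-! The legs `X̂ ⟶ X′` of the comparison cone are adjoint to the quotient maps `X ⟶ X′`.
A morphism `X̂ ⟶ Y` with `Y` in `C₀` is adjoint to a morphism `X ⟶ Y` of `C`, so it factors
through the leg of the image quotient; and two such factorizations agree on `X̂` exactly when
they agree on `X`. Since any two quotients are refined by the image of `X` in their product,
every other cone over the quotients satisfies the same relations. Presenting `X̂` as a
cofiltered limit of objects of `C₀` and using that morphisms out of a cofiltered limit to an
object of `C₀` factor through a stage, these two facts make the comparison cone a limit. -/

namespace ProData

variable {B : Type u} [Category.{v} B] [Abelian B] {Q : Type u'} [Category.{v'} Q] [Abelian Q]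

theorem nonempty_isLimit_of_factorization (D : ProData B Q) {J : Type w} [Category J]
    {F : J ⥤ B} (c : Cone (F ⋙ D.ι))
    (hfac : ∀ (Y : B) (f : c.pt ⟶ D.ι.obj Y),
      ∃ (j : J) (g : F.obj j ⟶ Y), f = c.π.app j ≫ D.ι.map g)
    (hcompat : ∀ (s : Cone (F ⋙ D.ι)) {i j : J} {Y : B} (u : F.obj i ⟶ Y) (v : F.obj j ⟶ Y),
      c.π.app i ≫ D.ι.map u = c.π.app j ≫ D.ι.map v →
        s.π.app i ≫ D.ι.map u = s.π.app j ≫ D.ι.map v) :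
    Nonempty (IsLimit c) := by
  obtain ⟨I, hI, G, d₀, ⟨hd₀⟩, ⟨ψ⟩⟩ := D.presentation c.pt
  let d := d₀.extend ψ.inv
  have hd : IsLimit d := hd₀.extendIso ψ.inv
  choose jk gk hgk using fun k => hfac (G.obj k) (d.π.app k)
  -- Each leg of a presentation `d` of `c.pt` factors through `c`; this turns cones over `F`
  -- into cones over `G`.
  let transfer (s : Cone (F ⋙ D.ι)) : Cone (G ⋙ D.ι) :=
    { pt := s.pt
      π :=
        { app := fun k => s.π.app (jk k) ≫ D.ι.map (gk k)
          naturality := fun k k' a => by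
            have h := hcompat s (gk k') (gk k ≫ G.map a) (by
              rw [← hgk, D.ι.map_comp, ← Category.assoc, ← hgk]
              exact (d.w a).symm)
            simp only [Functor.const_obj_obj, Functor.comp_obj, Functor.const_obj_map,
              Category.id_comp, Functor.comp_map, Category.assoc, h, D.ι.map_comp] } }
  refine ⟨{ lift := fun s => hd.lift (transfer s), fac := fun s j => ?_, uniq := fun s m hm => ?_ }⟩
  · obtain ⟨k, h, hh⟩ := D.hom_surj I hI G d hd (F.obj j) (c.π.app j)
    have hs : s.π.app (jk k) ≫ D.ι.map (gk k ≫ h) = s.π.app j := by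
      simpa using hcompat s (gk k ≫ h) (𝟙 (F.obj j)) (by simp [hh, hgk])
    simp [hh, ← hs, transfer]
  · refine hd.hom_ext fun k => ?_
    rw [hd.fac, hgk, ← Category.assoc, hm]

end ProData

namespace QuotIndex

variable {P₀ : C → Prop} {X : C}

@[simp]
theorem quotDiagram_obj (A : QuotIndex P₀ X) : (quotDiagram P₀ X).obj A = A.obj := rfl

instance (A A' : QuotIndex P₀ X) : Subsingleton (A ⟶ A') :=
  ⟨fun f g => Subtype.ext <| by
    have := A.epi
    exact (cancel_epi A.e).1 (f.2.trans g.2.symm)⟩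

noncomputable abbrev image [Abelian C] (hsub : ∀ {A B : C} (f : A ⟶ B), Mono f → P₀ B → P₀ A)
    {Y : ObjectProperty.FullSubcategory P₀} (f : X ⟶ Y.obj) : QuotIndex P₀ X where
  obj := ⟨Abelian.image f, hsub (Abelian.image.ι f) inferInstance Y.2⟩
  e := Abelian.factorThruImage f
  epi := inferInstance

@[simp]
theorem image_e_comp_ι [Abelian C] (hsub : ∀ {A B : C} (f : A ⟶ B), Mono f → P₀ B → P₀ A)
    {Y : ObjectProperty.FullSubcategory P₀} (f : X ⟶ Y.obj) :
    (image hsub f).e ≫ Abelian.image.ι f = f :=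
  Abelian.image.fac f

/-- Two quotients are refined by the image of `X` in their product. -/
theorem isCofilteredOrEmpty [Abelian C] (hsub : ∀ {A B : C} (f : A ⟶ B), Mono f → P₀ B → P₀ A)
    [HasBinaryProducts (ObjectProperty.FullSubcategory P₀)]
    [PreservesLimitsOfShape (Discrete WalkingPair) (ObjectProperty.ι P₀)] :
    IsCofilteredOrEmpty (QuotIndex P₀ X) where
  cone_objs i j := by
    let h : X ⟶ (i.obj ⨯ j.obj).obj :=
      prod.lift i.e j.e ≫ (PreservesLimitPair.iso (ObjectProperty.ι P₀) i.obj j.obj).inv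
    refine ⟨image hsub h, ⟨Abelian.image.ι h ≫ (prod.fst : i.obj ⨯ j.obj ⟶ _).hom, ?_⟩,
      ⟨Abelian.image.ι h ≫ (prod.snd : i.obj ⨯ j.obj ⟶ _).hom, ?_⟩, trivial⟩
    · rw [← Category.assoc, image_e_comp_ι, Category.assoc]
      exact (congrArg _ (PreservesLimitPair.iso_inv_fst _ _ _)).trans (prod.lift_fst _ _)
    · rw [← Category.assoc, image_e_comp_ι, Category.assoc]
      exact (congrArg _ (PreservesLimitPair.iso_inv_snd _ _ _)).trans (prod.lift_snd _ _)
  cone_maps _ _ f g := ⟨_, 𝟙 _, by rw [Subsingleton.elim f g]⟩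

theorem cone_π_comp_eq [Abelian C] (hsub : ∀ {A B : C} (f : A ⟶ B), Mono f → P₀ B → P₀ A)
    [HasBinaryProducts (ObjectProperty.FullSubcategory P₀)]
    [PreservesLimitsOfShape (Discrete WalkingPair) (ObjectProperty.ι P₀)]
    {Q : Type u'} [Category.{v'} Q] {G : ObjectProperty.FullSubcategory P₀ ⥤ Q}
    (s : Cone (quotDiagram P₀ X ⋙ G)) {i j : QuotIndex P₀ X}
    {Y : ObjectProperty.FullSubcategory P₀} (u : i.obj ⟶ Y) (v : j.obj ⟶ Y)
    (h : i.e ≫ u.hom = j.e ≫ v.hom) :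
    s.π.app i ≫ G.map u = s.π.app j ≫ G.map v := by
  have := isCofilteredOrEmpty (X := X) hsub
  obtain ⟨r, a, b, -⟩ := IsCofilteredOrEmpty.cone_objs i j
  have hab : (quotDiagram P₀ X).map a ≫ u = (quotDiagram P₀ X).map b ≫ v := by
    have := r.epi
    ext
    refine (cancel_epi r.e).1 ?_
    simpa [quotDiagram, ← Category.assoc, a.2, b.2] using h
  have hG : (quotDiagram P₀ X ⋙ G).map a ≫ G.map u = (quotDiagram P₀ X ⋙ G).map b ≫ G.map v :=
    (G.map_comp _ _).symm.trans ((congrArg G.map hab).trans (G.map_comp _ _))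
  calc s.π.app i ≫ G.map u = s.π.app r ≫ (quotDiagram P₀ X ⋙ G).map a ≫ G.map u :=
        (s.w_assoc a _).symm
    _ = s.π.app r ≫ (quotDiagram P₀ X ⋙ G).map b ≫ G.map v := congrArg (s.π.app r ≫ ·) hG
    _ = s.π.app j ≫ G.map v := s.w_assoc b _

end QuotIndex

section Completion

variable {P₀ : C → Prop} {P : Type u'} [Category.{v'} P] {ι : C ⥤ P}
  {P₀P : Type u''} [Category.{v''} P₀P] {ι₀ : ObjectProperty.FullSubcategory P₀ ⥤ P₀P}
  {inc : P₀P ⥤ P} (hcomp : ObjectProperty.ι P₀ ⋙ ι ≅ ι₀ ⋙ inc) {L : P ⥤ P₀P} (adj : L ⊣ inc)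
  {X : C}

def quotientProj (i : QuotIndex P₀ X) : L.obj (ι.obj X) ⟶ ι₀.obj i.obj :=
  (adj.homEquiv _ _).symm (ι.map i.e ≫ hcomp.hom.app i.obj)

theorem homEquiv_quotientProj_comp (i : QuotIndex P₀ X) {Y : ObjectProperty.FullSubcategory P₀}
    (u : i.obj ⟶ Y) :
    adj.homEquiv _ _ (quotientProj hcomp adj i ≫ ι₀.map u)
      = ι.map (i.e ≫ u.hom) ≫ hcomp.hom.app Y := by
  rw [Adjunction.homEquiv_naturality_right, quotientProj, Equiv.apply_symm_apply,
    ι.map_comp, Category.assoc, Category.assoc]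
  exact congrArg _ (hcomp.hom.naturality u).symm

theorem quotientProj_comp_eq_of_e_comp_eq {i j : QuotIndex P₀ X}
    {Y : ObjectProperty.FullSubcategory P₀} (u : i.obj ⟶ Y) (v : j.obj ⟶ Y)
    (h : i.e ≫ u.hom = j.e ≫ v.hom) :
    quotientProj hcomp adj i ≫ ι₀.map u = quotientProj hcomp adj j ≫ ι₀.map v := by
  rw [← (adj.homEquiv _ _).apply_eq_iff_eq, homEquiv_quotientProj_comp,
    homEquiv_quotientProj_comp, h]

theorem e_comp_eq_of_quotientProj_comp_eq [ι.Faithful] {i j : QuotIndex P₀ X}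
    {Y : ObjectProperty.FullSubcategory P₀} (u : i.obj ⟶ Y) (v : j.obj ⟶ Y)
    (h : quotientProj hcomp adj i ≫ ι₀.map u = quotientProj hcomp adj j ≫ ι₀.map v) :
    i.e ≫ u.hom = j.e ≫ v.hom := by
  rwa [← (adj.homEquiv _ _).apply_eq_iff_eq, homEquiv_quotientProj_comp,
    homEquiv_quotientProj_comp, cancel_mono, ι.map_injective.eq_iff] at h

variable (X) in
def quotientCone : Cone (quotDiagram P₀ X ⋙ ι₀) where
  pt := L.obj (ι.obj X)
  π :=
    { app := quotientProj hcomp adj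
      naturality := fun i j f => by
        have h := quotientProj_comp_eq_of_e_comp_eq hcomp adj ((quotDiagram P₀ X).map f)
          (𝟙 j.obj) (by simpa [quotDiagram] using f.2)
        dsimp only [Functor.comp_obj, Functor.comp_map, Functor.const_obj_obj,
          Functor.const_obj_map, QuotIndex.quotDiagram_obj] at h ⊢
        rw [Category.id_comp, h, ι₀.map_id, Category.comp_id] }

theorem exists_quotientProj_comp_eq [Abelian C] [ι.Full]
    (hsub : ∀ {A B : C} (f : A ⟶ B), Mono f → P₀ B → P₀ A)
    {Y : ObjectProperty.FullSubcategory P₀} (f : L.obj (ι.obj X) ⟶ ι₀.obj Y) :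
    ∃ (i : QuotIndex P₀ X) (g : i.obj ⟶ Y), f = quotientProj hcomp adj i ≫ ι₀.map g := by
  obtain ⟨f₀, hf₀⟩ := ι.map_surjective (adj.homEquiv _ _ f ≫ hcomp.inv.app Y)
  refine ⟨QuotIndex.image hsub f₀, ObjectProperty.homMk (Abelian.image.ι f₀), ?_⟩
  apply (adj.homEquiv _ _).injective
  rw [homEquiv_quotientProj_comp]
  simp [hf₀]

end Completion

theorem stmt_18_general [Abelian C] (P₀ : C → Prop)
    (hsub : ∀ {X Y : C} (f : X ⟶ Y), Mono f → P₀ Y → P₀ X)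
    [Abelian (ObjectProperty.FullSubcategory P₀)]
    [PreservesFiniteLimits (ObjectProperty.ι P₀)]
    {P : Type u'} [Category.{v'} P] [Abelian P] (D : ProData C P)
    {P₀P : Type u''} [Category.{v''} P₀P] [Abelian P₀P]
    (D₀ : ProData (ObjectProperty.FullSubcategory P₀) P₀P)
    (inc : P₀P ⥤ P)
    (hcomp : ObjectProperty.ι P₀ ⋙ D.ι ≅ D₀.ι ⋙ inc)
    (L : P ⥤ P₀P) (adj : L ⊣ inc)
    (X : C) :
    ∃ c : Cone (quotDiagram P₀ X ⋙ D₀.ι),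
      Nonempty (IsLimit c) ∧ Nonempty (c.pt ≅ L.obj (D.ι.obj X)) := by
  have := D.full
  have := D.faithful
  refine ⟨quotientCone hcomp adj X, D₀.nonempty_isLimit_of_factorization _
    (fun _ f => exists_quotientProj_comp_eq hcomp adj hsub f) ?_, ⟨Iso.refl _⟩⟩
  exact fun s _ _ _ u v h =>
    QuotIndex.cone_π_comp_eq hsub s u v (e_comp_eq_of_quotientProj_comp_eq hcomp adj u v h)

/-- Let `C` be an abelian category and `C₀ ⊆ C` a full abelian subcategory closed under the
formation of subobjects in `C`.  Then the left adjoint `X ↦ X̂` of the inclusion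
`Pro(C₀) ↪ Pro(C)` (the completion of `C` along `C₀`), evaluated on an object `X` of `C`, is
naturally isomorphic to the pro-object `"lim" X′`, where `X′` ranges over the cofiltered
system of quotients of `X` lying in `C₀`, with transition maps the induced quotient maps. -/
theorem stmt_18 [Abelian C] (P₀ : C → Prop)
    (hzero : P₀ 0)
    (hsub : ∀ {X Y : C} (f : X ⟶ Y), Mono f → P₀ Y → P₀ X)
    [Abelian (ObjectProperty.FullSubcategory P₀)]
    [PreservesFiniteLimits (ObjectProperty.ι P₀)]
    [PreservesFiniteColimits (ObjectProperty.ι P₀)]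
    {P : Type u'} [Category.{v'} P] [Abelian P] (D : ProData C P)
    {P₀P : Type u''} [Category.{v''} P₀P] [Abelian P₀P]
    (D₀ : ProData (ObjectProperty.FullSubcategory P₀) P₀P)
    (inc : P₀P ⥤ P) [inc.Full] [inc.Faithful]
    (hcomp : ObjectProperty.ι P₀ ⋙ D.ι ≅ D₀.ι ⋙ inc)
    (L : P ⥤ P₀P) (adj : L ⊣ inc)
    (X : C) :
    ∃ c : Cone (quotDiagram P₀ X ⋙ D₀.ι),
      Nonempty (IsLimit c) ∧ Nonempty (c.pt ≅ L.obj (D.ι.obj X)) :=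
  stmt_18_general P₀ hsub D D₀ inc hcomp L adj X
end
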